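/- Define ℒφ(x) = ½ ∫_{ℝ^n} (2φ(x) − φ(x+y) − φ(x−y)) π(y) dy (an absolutely convergent integral since φ is smooth and bounded with bounded second derivatives). There exists a constant C > 0, depending only on n, α, δ, c₂ and φ₀, such that for every R ≥ 1 and every p ∈ [1, ∞], ‖ℒφ‖_{L^p(ℝ^n)} ≤ C R^{n/p} ( R^{−α} + R^{−δ} ), with the convention n/∞ = 0. -/

import Mathlib

open MeasureTheory
open scoped ENNReal
open Metric Set

/-- The Lévy operator applied to `f`, in symmetrized form:
`ℒf(x) = ½ ∫ (2 f(x) - f(x+y) - f(x-y)) π(y) dy`. -/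
noncomputable def levyApp (n : ℕ) (pik f : EuclideanSpace ℝ (Fin n) → ℝ)
    (x : EuclideanSpace ℝ (Fin n)) : ℝ :=
  (1 / 2) * ∫ y, (2 * f x - f (x + y) - f (x - y)) * pik y

/-- Hypothesis [ND] on the Lévy measure density `π`. -/
def satND (n : ℕ) (α δ c₁ c₂ : ℝ) (pik : EuclideanSpace ℝ (Fin n) → ℝ) : Prop :=
  Measurable pik ∧ (∀ y, pik (-y) = pik y) ∧
  (∀ y : EuclideanSpace ℝ (Fin n), 0 < ‖y‖ → ‖y‖ ≤ 1 →
    c₁ * ‖y‖ ^ (-(n : ℝ) - α) ≤ pik y ∧ pik y ≤ c₂ * ‖y‖ ^ (-(n : ℝ) - α)) ∧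
  (∀ y : EuclideanSpace ℝ (Fin n), 1 < ‖y‖ →
    0 ≤ pik y ∧ pik y ≤ c₂ * ‖y‖ ^ (-(n : ℝ) - δ))

private lemma exists_dyadic_tail {R t : ℝ} (hR : 0 < R) (ht : R < t) :
    ∃ k : ℕ, 2 ^ k * R < t ∧ t ≤ 2 ^ (k + 1) * R := by
  classical
  have hx : ∃ m : ℕ, t ≤ 2 ^ m * R := by
    obtain ⟨m, hm⟩ := pow_unbounded_of_one_lt (t / R) (one_lt_two (α := ℝ))
    exact ⟨m, by rw [← div_le_iff₀ hR]; exact hm.le⟩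
  have h0 : ¬ (t ≤ 2 ^ 0 * R) := by simpa using not_le.mpr ht
  set m := Nat.find hx with hm
  have hmspec := Nat.find_spec hx
  have hm0 : m ≠ 0 := by
    intro h
    rw [hm] at h
    rw [h] at hmspec
    exact h0 hmspec
  refine ⟨m - 1, ?_, ?_⟩
  · have := Nat.find_min hx (m := m - 1) (by omega)
    exact not_le.mp this
  · have : m - 1 + 1 = m := by omega
    rw [this]; exact hmspec

private lemma exists_dyadic_ball {r t : ℝ} (ht : 0 < t) (htr : t ≤ r) :
    ∃ k : ℕ, r / 2 ^ (k + 1) < t ∧ t ≤ r / 2 ^ k := by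
  classical
  have hr : 0 < r := lt_of_lt_of_le ht htr
  have hx : ∃ m : ℕ, r / 2 ^ m < t := by
    obtain ⟨m, hm⟩ := pow_unbounded_of_one_lt (r / t) (one_lt_two (α := ℝ))
    refine ⟨m, ?_⟩
    rw [div_lt_iff₀ (by positivity)] at hm ⊢
    rw [mul_comm] at hm
    exact hm
  have h0 : ¬ (r / 2 ^ 0 < r) := by simp
  set m := Nat.find hx with hm
  have hmspec := Nat.find_spec hx
  have hm0 : m ≠ 0 := by
    intro h
    rw [hm] at h
    rw [h] at hmspec
    have := hmspec
    simp only [pow_zero, div_one] at this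
    exact absurd htr (not_le.mpr this)
  refine ⟨m - 1, ?_, ?_⟩
  · have : m - 1 + 1 = m := by omega
    rw [this]; exact hmspec
  · have := Nat.find_min hx (m := m - 1) (by omega)
    exact not_lt.mp this

private lemma lintegral_tail_rpow (n : ℕ) (hn : 1 ≤ n) {s : ℝ} (hs : 0 < s) :
    ∃ C : ℝ, 0 < C ∧ ∀ R : ℝ, 0 < R →
      ∫⁻ y in (closedBall (0 : EuclideanSpace ℝ (Fin n)) R)ᶜ,
        ENNReal.ofReal (‖y‖ ^ (-(n : ℝ) - s)) ≤ ENNReal.ofReal (C * R ^ (-s)) := by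
  set E := EuclideanSpace ℝ (Fin n)
  set V := volume (closedBall (0 : E) 1) with hVdef
  have hVfin : V ≠ ⊤ := measure_closedBall_lt_top.ne
  set q : ℝ≥0∞ := ENNReal.ofReal (2 ^ (-s)) with hqdef
  have hq1 : q < 1 := by
    rw [hqdef]
    exact ENNReal.ofReal_lt_one.mpr
      (Real.rpow_lt_one_of_one_lt_of_neg one_lt_two (neg_neg_iff_pos.mpr hs))
  have hq1' : (1 : ℝ≥0∞) - q ≠ 0 := (tsub_pos_of_lt hq1).ne'
  set W := V * (1 - q)⁻¹ with hWdef
  have hWfin : W ≠ ⊤ := ENNReal.mul_ne_top hVfin (ENNReal.inv_ne_top.mpr hq1')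
  refine ⟨2 ^ (n : ℝ) * (W.toReal + 1), by positivity, fun R hR => ?_⟩
  set A : ℕ → Set E := fun k =>
    closedBall 0 (2 ^ (k + 1) * R) \ closedBall 0 (2 ^ k * R) with hAdef
  have hcover : (closedBall (0 : E) R)ᶜ ⊆ ⋃ k, A k := by
    intro y hy
    rw [mem_compl_iff, mem_closedBall_zero_iff, not_le] at hy
    obtain ⟨k, hk1, hk2⟩ := exists_dyadic_tail hR hy
    exact mem_iUnion.mpr ⟨k, by
      simp only [hAdef, mem_diff, mem_closedBall_zero_iff, not_le]
      exact ⟨hk2, hk1⟩⟩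
  have hfinr : Module.finrank ℝ E = n := finrank_euclideanSpace_fin
  have key : ∀ k : ℕ, ((2:ℝ) ^ k * R) ^ (-(n : ℝ) - s) * ((2:ℝ) ^ (k+1) * R) ^ (n : ℝ)
      = 2 ^ (n : ℝ) * R ^ (-s) * ((2:ℝ) ^ (-s)) ^ k := by
    intro k
    have h2 : (0:ℝ) ≤ 2 := by norm_num
    rw [Real.mul_rpow (by positivity) hR.le, Real.mul_rpow (by positivity) hR.le,
      ← Real.rpow_natCast (2:ℝ) k, ← Real.rpow_natCast (2:ℝ) (k+1),
      ← Real.rpow_natCast ((2:ℝ) ^ (-s)) k,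
      ← Real.rpow_mul h2, ← Real.rpow_mul h2, ← Real.rpow_mul h2]
    push_cast
    rw [show ((2:ℝ) ^ ((k:ℝ) * (-(n:ℝ) - s)) * R ^ (-(n:ℝ) - s)) * (2 ^ (((k:ℝ)+1) * (n:ℝ)) * R ^ (n:ℝ))
        = (2 ^ ((k:ℝ) * (-(n:ℝ) - s)) * 2 ^ (((k:ℝ)+1) * (n:ℝ))) * (R ^ (-(n:ℝ) - s) * R ^ (n:ℝ)) by ring]
    rw [← Real.rpow_add two_pos, ← Real.rpow_add hR]
    rw [show (k:ℝ) * (-(n:ℝ) - s) + ((k:ℝ)+1) * (n:ℝ) = (n:ℝ) + (-s) * (k:ℝ) by ring,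
      show (-(n:ℝ) - s) + (n:ℝ) = -s by ring,
      Real.rpow_add two_pos]
    ring
  calc ∫⁻ y in (closedBall (0 : E) R)ᶜ, ENNReal.ofReal (‖y‖ ^ (-(n : ℝ) - s))
      ≤ ∫⁻ y in ⋃ k, A k, ENNReal.ofReal (‖y‖ ^ (-(n : ℝ) - s)) := lintegral_mono_set hcover
    _ ≤ ∑' k, ∫⁻ y in A k, ENNReal.ofReal (‖y‖ ^ (-(n : ℝ) - s)) := lintegral_iUnion_le _ _
    _ ≤ ∑' k, (ENNReal.ofReal (2 ^ (n : ℝ) * R ^ (-s)) * V) * q ^ k := by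
        refine ENNReal.tsum_le_tsum fun k => ?_
        have hmeas : MeasurableSet (A k) :=
          (measurableSet_closedBall).diff measurableSet_closedBall
        have hpt : ∀ y ∈ A k, ENNReal.ofReal (‖y‖ ^ (-(n : ℝ) - s))
            ≤ ENNReal.ofReal (((2:ℝ) ^ k * R) ^ (-(n : ℝ) - s)) := by
          intro y hy
          rcases hy with ⟨_, hy2⟩
          rw [mem_closedBall_zero_iff, not_le] at hy2
          exact ENNReal.ofReal_le_ofReal
            (Real.rpow_le_rpow_of_nonpos (by positivity) hy2.le (by have := Nat.cast_nonneg (α := ℝ) n; linarith))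
        calc ∫⁻ y in A k, ENNReal.ofReal (‖y‖ ^ (-(n : ℝ) - s))
            ≤ ∫⁻ _ in A k, ENNReal.ofReal (((2:ℝ) ^ k * R) ^ (-(n : ℝ) - s)) :=
              setLIntegral_mono' hmeas hpt
          _ = ENNReal.ofReal (((2:ℝ) ^ k * R) ^ (-(n : ℝ) - s)) * volume (A k) :=
              setLIntegral_const _ _
          _ ≤ ENNReal.ofReal (((2:ℝ) ^ k * R) ^ (-(n : ℝ) - s)) *
              (ENNReal.ofReal (((2:ℝ) ^ (k+1) * R) ^ (n : ℝ)) * V) := by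
              gcongr
              have := Measure.addHaar_closedBall' (volume : Measure E) (0 : E)
                (r := 2 ^ (k+1) * R) (by positivity)
              calc volume (A k) ≤ volume (closedBall (0:E) (2 ^ (k+1) * R)) :=
                    measure_mono diff_subset
                _ = ENNReal.ofReal ((2 ^ (k+1) * R) ^ Module.finrank ℝ E) * V := this
                _ = ENNReal.ofReal (((2:ℝ) ^ (k+1) * R) ^ (n : ℝ)) * V := by
                    rw [hfinr, Real.rpow_natCast]
          _ = (ENNReal.ofReal (2 ^ (n : ℝ) * R ^ (-s)) * V) * q ^ k := by
              rw [← mul_assoc, ← ENNReal.ofReal_mul (by positivity), key k,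
                ENNReal.ofReal_mul (by positivity), hqdef,
                ← ENNReal.ofReal_pow (by positivity)]
              ring
    _ = (ENNReal.ofReal (2 ^ (n : ℝ) * R ^ (-s)) * V) * (1 - q)⁻¹ := by
        rw [ENNReal.tsum_mul_left, ENNReal.tsum_geometric]
    _ ≤ ENNReal.ofReal (2 ^ (n : ℝ) * (W.toReal + 1) * R ^ (-s)) := by
        have hW : W ≤ ENNReal.ofReal (W.toReal + 1) :=
          (ENNReal.ofReal_toReal hWfin).symm.trans_le
            (ENNReal.ofReal_le_ofReal (by linarith))
        calc ENNReal.ofReal (2 ^ (n : ℝ) * R ^ (-s)) * V * (1 - q)⁻¹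
            = ENNReal.ofReal (2 ^ (n : ℝ) * R ^ (-s)) * W := by rw [hWdef, mul_assoc]
          _ ≤ ENNReal.ofReal (2 ^ (n : ℝ) * R ^ (-s)) * ENNReal.ofReal (W.toReal + 1) := by gcongr
          _ = ENNReal.ofReal (2 ^ (n : ℝ) * (W.toReal + 1) * R ^ (-s)) := by
              rw [← ENNReal.ofReal_mul (by positivity)]
              ring_nf

private lemma lintegral_ball_rpow (n : ℕ) (hn : 1 ≤ n) {c : ℝ} (hc : -(n : ℝ) < c) :
    ∃ C : ℝ, 0 < C ∧ ∀ r : ℝ, 0 < r →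
      ∫⁻ y in closedBall (0 : EuclideanSpace ℝ (Fin n)) r \ {0},
        ENNReal.ofReal (‖y‖ ^ c) ≤ ENNReal.ofReal (C * r ^ ((n : ℝ) + c)) := by
  set E := EuclideanSpace ℝ (Fin n)
  set V := volume (closedBall (0 : E) 1) with hVdef
  have hVfin : V ≠ ⊤ := measure_closedBall_lt_top.ne
  have hnc : 0 < (n : ℝ) + c := by linarith
  set q : ℝ≥0∞ := ENNReal.ofReal (2 ^ (-((n : ℝ) + c))) with hqdef
  have hq1 : q < 1 := by
    rw [hqdef]
    exact ENNReal.ofReal_lt_one.mpr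
      (Real.rpow_lt_one_of_one_lt_of_neg one_lt_two (neg_neg_iff_pos.mpr hnc))
  have hq1' : (1 : ℝ≥0∞) - q ≠ 0 := (tsub_pos_of_lt hq1).ne'
  set W := V * (1 - q)⁻¹ with hWdef
  have hWfin : W ≠ ⊤ := ENNReal.mul_ne_top hVfin (ENNReal.inv_ne_top.mpr hq1')
  refine ⟨2 ^ |c| * (W.toReal + 1), by positivity, fun r hr => ?_⟩
  set A : ℕ → Set E := fun k =>
    closedBall 0 (r / 2 ^ k) \ closedBall 0 (r / 2 ^ (k + 1)) with hAdef
  have hcover : closedBall (0 : E) r \ {0} ⊆ ⋃ k, A k := by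
    intro y hy
    rcases hy with ⟨hy1, hy2⟩
    rw [mem_closedBall_zero_iff] at hy1
    have hy0 : 0 < ‖y‖ := norm_pos_iff.mpr (by simpa using hy2)
    obtain ⟨k, hk1, hk2⟩ := exists_dyadic_ball hy0 hy1
    exact mem_iUnion.mpr ⟨k, by
      simp only [hAdef, mem_diff, mem_closedBall_zero_iff, not_le]
      exact ⟨hk2, hk1⟩⟩
  have hfinr : Module.finrank ℝ E = n := finrank_euclideanSpace_fin
  -- pointwise bound on A k
  have hpt : ∀ k : ℕ, ∀ y ∈ A k,
      ENNReal.ofReal (‖y‖ ^ c) ≤ ENNReal.ofReal (2 ^ |c| * (r / 2 ^ k) ^ c) := by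
    intro k y hy
    rcases hy with ⟨hy1, hy2⟩
    rw [mem_closedBall_zero_iff] at hy1
    rw [mem_closedBall_zero_iff, not_le] at hy2
    have h2k : (0:ℝ) < r / 2 ^ (k+1) := by positivity
    have hy0 : 0 < ‖y‖ := lt_trans h2k hy2
    refine ENNReal.ofReal_le_ofReal ?_
    rcases le_or_gt 0 c with hc0 | hc0
    · have h1 : ‖y‖ ^ c ≤ (r / 2 ^ k) ^ c := Real.rpow_le_rpow hy0.le hy1 hc0
      have h2 : (1:ℝ) ≤ 2 ^ |c| :=
        Real.one_le_rpow one_le_two (abs_nonneg c)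
      nlinarith [Real.rpow_nonneg (by positivity : (0:ℝ) ≤ r / 2 ^ k) c]
    · have h1 : ‖y‖ ^ c ≤ (r / 2 ^ (k+1)) ^ c :=
        Real.rpow_le_rpow_of_nonpos h2k hy2.le hc0.le
      have h2 : (r / 2 ^ (k+1)) ^ c = 2 ^ (-c) * (r / 2 ^ k) ^ c := by
        have : r / 2 ^ (k+1) = (r / 2 ^ k) / 2 := by ring
        rw [this, Real.div_rpow (by positivity) (by norm_num),
          Real.rpow_neg (by norm_num : (0:ℝ) ≤ 2)]
        field_simp
      have h3 : (2:ℝ) ^ (-c) = 2 ^ |c| := by rw [abs_of_neg hc0]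
      rw [h2, h3] at h1
      exact h1
  have key : ∀ k : ℕ, (2:ℝ) ^ |c| * (r / 2 ^ k) ^ c * (r / 2 ^ k) ^ (n : ℝ)
      = 2 ^ |c| * r ^ ((n:ℝ) + c) * ((2:ℝ) ^ (-((n:ℝ)+c))) ^ k := by
    intro k
    have h2 : (0:ℝ) ≤ 2 := by norm_num
    have h2k : (0:ℝ) < 2 ^ k := by positivity
    rw [mul_assoc, ← Real.rpow_add (by positivity : (0:ℝ) < r / 2 ^ k)]
    rw [Real.div_rpow hr.le h2k.le, ← Real.rpow_natCast (2:ℝ) k,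
      ← Real.rpow_mul h2, ← Real.rpow_natCast ((2:ℝ) ^ (-((n:ℝ)+c))) k,
      ← Real.rpow_mul h2]
    rw [show c + (n:ℝ) = (n:ℝ) + c by ring, div_eq_mul_inv,
      ← Real.rpow_neg h2, show -((k:ℝ) * ((n:ℝ) + c)) = -((n:ℝ)+c) * (k:ℝ) by ring]
    ring
  calc ∫⁻ y in closedBall (0 : E) r \ {0}, ENNReal.ofReal (‖y‖ ^ c)
      ≤ ∫⁻ y in ⋃ k, A k, ENNReal.ofReal (‖y‖ ^ c) := lintegral_mono_set hcover
    _ ≤ ∑' k, ∫⁻ y in A k, ENNReal.ofReal (‖y‖ ^ c) := lintegral_iUnion_le _ _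
    _ ≤ ∑' k, (ENNReal.ofReal (2 ^ |c| * r ^ ((n:ℝ) + c)) * V) * q ^ k := by
        refine ENNReal.tsum_le_tsum fun k => ?_
        have hmeas : MeasurableSet (A k) :=
          (measurableSet_closedBall).diff measurableSet_closedBall
        calc ∫⁻ y in A k, ENNReal.ofReal (‖y‖ ^ c)
            ≤ ∫⁻ _ in A k, ENNReal.ofReal (2 ^ |c| * (r / 2 ^ k) ^ c) :=
              setLIntegral_mono' hmeas (hpt k)
          _ = ENNReal.ofReal (2 ^ |c| * (r / 2 ^ k) ^ c) * volume (A k) :=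
              setLIntegral_const _ _
          _ ≤ ENNReal.ofReal (2 ^ |c| * (r / 2 ^ k) ^ c) *
              (ENNReal.ofReal ((r / 2 ^ k) ^ (n : ℝ)) * V) := by
              gcongr
              have := Measure.addHaar_closedBall' (volume : Measure E) (0 : E)
                (r := r / 2 ^ k) (by positivity)
              calc volume (A k) ≤ volume (closedBall (0:E) (r / 2 ^ k)) :=
                    measure_mono diff_subset
                _ = ENNReal.ofReal ((r / 2 ^ k) ^ Module.finrank ℝ E) * V := this
                _ = ENNReal.ofReal ((r / 2 ^ k) ^ (n : ℝ)) * V := by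
                    rw [hfinr, Real.rpow_natCast]
          _ = (ENNReal.ofReal (2 ^ |c| * r ^ ((n:ℝ) + c)) * V) * q ^ k := by
              rw [← mul_assoc, ← ENNReal.ofReal_mul (by positivity), key k,
                ENNReal.ofReal_mul (by positivity), hqdef,
                ← ENNReal.ofReal_pow (by positivity)]
              ring
    _ = (ENNReal.ofReal (2 ^ |c| * r ^ ((n:ℝ) + c)) * V) * (1 - q)⁻¹ := by
        rw [ENNReal.tsum_mul_left, ENNReal.tsum_geometric]
    _ ≤ ENNReal.ofReal (2 ^ |c| * (W.toReal + 1) * r ^ ((n:ℝ) + c)) := by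
        have hW : W ≤ ENNReal.ofReal (W.toReal + 1) :=
          (ENNReal.ofReal_toReal hWfin).symm.trans_le
            (ENNReal.ofReal_le_ofReal (by linarith))
        calc ENNReal.ofReal (2 ^ |c| * r ^ ((n:ℝ) + c)) * V * (1 - q)⁻¹
            = ENNReal.ofReal (2 ^ |c| * r ^ ((n:ℝ) + c)) * W := by rw [hWdef, mul_assoc]
          _ ≤ ENNReal.ofReal (2 ^ |c| * r ^ ((n:ℝ) + c)) * ENNReal.ofReal (W.toReal + 1) := by
              gcongr
          _ = ENNReal.ofReal (2 ^ |c| * (W.toReal + 1) * r ^ ((n:ℝ) + c)) := by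
              rw [← ENNReal.ofReal_mul (by positivity)]
              ring_nf

private lemma core_bound (n : ℕ) (hn : 1 ≤ n) {α δ : ℝ}
    (hδpos : 0 < δ) (hδα : δ < α) (hα2 : α < 2) {c₂ : ℝ} (hc₂ : 0 < c₂) :
    ∃ C : ℝ, 0 < C ∧ ∀ K : ℝ, 1 ≤ K → ∀ c₁ : ℝ, 0 < c₁ →
      ∀ pik : EuclideanSpace ℝ (Fin n) → ℝ, satND n α δ c₁ c₂ pik →
      ∀ R : ℝ, 1 ≤ R →
      ∫⁻ y, (‖pik y‖₊ : ℝ≥0∞) * ENNReal.ofReal (min (K * R ^ (-2 : ℝ) * ‖y‖ ^ 2) 4)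
        ≤ ENNReal.ofReal (C * K * (R ^ (-α) + R ^ (-δ))) := by
  have hαpos : 0 < α := lt_trans hδpos hδα
  have hδ2 : δ < 2 := lt_trans hδα hα2
  obtain ⟨Cα, hCα, hCαle⟩ := lintegral_ball_rpow n hn (c := 2 - (n : ℝ) - α)
    (by push_cast; linarith)
  obtain ⟨Cδ, hCδ, hCδle⟩ := lintegral_ball_rpow n hn (c := 2 - (n : ℝ) - δ)
    (by push_cast; linarith)
  obtain ⟨Ct, hCt, hCtle⟩ := lintegral_tail_rpow n hn hδpos
  refine ⟨c₂ * (Cα + Cδ + 4 * Ct), by positivity, fun K hK c₁ hc₁ pik hND R hR => ?_⟩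
  have hR0 : (0:ℝ) < R := lt_of_lt_of_le one_pos hR
  obtain ⟨hmeas, hsymm, hle1, hgt1⟩ := hND
  set S₁ : Set (EuclideanSpace ℝ (Fin n)) := closedBall 0 1 \ {0} with hS₁
  set S₂ : Set (EuclideanSpace ℝ (Fin n)) := closedBall 0 R \ closedBall 0 1 with hS₂
  set S₃ : Set (EuclideanSpace ℝ (Fin n)) := (closedBall (0 : EuclideanSpace ℝ (Fin n)) R)ᶜ with hS₃
  set f : EuclideanSpace ℝ (Fin n) → ℝ≥0∞ :=
    fun y => (‖pik y‖₊ : ℝ≥0∞) * ENNReal.ofReal (min (K * R ^ (-2 : ℝ) * ‖y‖ ^ 2) 4) with hf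
  have hzero : volume ({0} : Set (EuclideanSpace ℝ (Fin n))) = 0 := by
    have h2 : volume (closedBall (0 : EuclideanSpace ℝ (Fin n)) 0) = 0 := by
      rw [Measure.addHaar_closedBall' volume (0 : EuclideanSpace ℝ (Fin n)) le_rfl,
        finrank_euclideanSpace_fin, zero_pow (by omega : n ≠ 0)]
      simp
    refine le_antisymm (le_trans (measure_mono ?_) h2.le) zero_le
    intro y hy; simp only [mem_singleton_iff] at hy; simp [hy]
  have hcover : (univ : Set (EuclideanSpace ℝ (Fin n))) ⊆ ({0} ∪ S₁) ∪ (S₂ ∪ S₃) := by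
    intro y _
    rcases eq_or_ne y 0 with h0 | h0
    · exact Or.inl (Or.inl (by simp [h0]))
    rcases le_or_gt ‖y‖ 1 with h1 | h1
    · exact Or.inl (Or.inr ⟨by simpa [mem_closedBall_zero_iff] using h1, by simpa using h0⟩)
    rcases le_or_gt ‖y‖ R with h2 | h2
    · refine Or.inr (Or.inl ⟨by simpa [mem_closedBall_zero_iff] using h2, ?_⟩)
      simp only [mem_closedBall_zero_iff, not_le]; exact h1
    · refine Or.inr (Or.inr ?_)
      simp only [hS₃, mem_compl_iff, mem_closedBall_zero_iff, not_le]; exact h2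
  -- region S₁
  have hbound₁ : ∫⁻ y in S₁, f y ≤ ENNReal.ofReal (c₂ * Cα * K * R ^ (-α)) := by
    have hpt : ∀ y ∈ S₁, f y ≤
        ENNReal.ofReal (c₂ * K * R ^ (-2:ℝ)) * ENNReal.ofReal (‖y‖ ^ (2 - (n:ℝ) - α)) := by
      intro y hy
      rcases hy with ⟨hy1, hy2⟩
      rw [mem_closedBall_zero_iff] at hy1
      have hy0 : 0 < ‖y‖ := norm_pos_iff.mpr (by simpa using hy2)
      obtain ⟨hpl, hpu⟩ := hle1 y hy0 hy1
      have hppos : 0 ≤ pik y := le_trans (by positivity) hpl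
      have hminn : 0 ≤ min (K * R ^ (-2:ℝ) * ‖y‖ ^ 2) 4 :=
        le_min (by positivity) (by norm_num)
      simp only [hf]
      rw [← enorm_eq_nnnorm, Real.enorm_eq_ofReal hppos, ← ENNReal.ofReal_mul hppos,
        ← ENNReal.ofReal_mul (by positivity)]
      refine ENNReal.ofReal_le_ofReal ?_
      calc pik y * min (K * R ^ (-2:ℝ) * ‖y‖ ^ 2) 4
          ≤ (c₂ * ‖y‖ ^ (-(n:ℝ) - α)) * (K * R ^ (-2:ℝ) * ‖y‖ ^ 2) :=
            mul_le_mul hpu (min_le_left _ _) hminn (by positivity)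
        _ = c₂ * K * R ^ (-2:ℝ) * (‖y‖ ^ (-(n:ℝ) - α) * ‖y‖ ^ (2:ℝ)) := by
            rw [← Real.rpow_natCast ‖y‖ 2]; push_cast; ring
        _ = c₂ * K * R ^ (-2:ℝ) * ‖y‖ ^ (2 - (n:ℝ) - α) := by
            rw [← Real.rpow_add hy0]; ring_nf
    calc ∫⁻ y in S₁, f y
        ≤ ∫⁻ y in S₁, ENNReal.ofReal (c₂ * K * R ^ (-2:ℝ)) *
            ENNReal.ofReal (‖y‖ ^ (2 - (n:ℝ) - α)) :=
          setLIntegral_mono' (measurableSet_closedBall.diff (measurableSet_singleton 0)) hpt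
      _ = ENNReal.ofReal (c₂ * K * R ^ (-2:ℝ)) *
            ∫⁻ y in S₁, ENNReal.ofReal (‖y‖ ^ (2 - (n:ℝ) - α)) :=
          lintegral_const_mul' _ _ ENNReal.ofReal_ne_top
      _ ≤ ENNReal.ofReal (c₂ * K * R ^ (-2:ℝ)) *
            ENNReal.ofReal (Cα * 1 ^ ((n:ℝ) + (2 - (n:ℝ) - α))) := by
          gcongr
          exact hCαle 1 one_pos
      _ ≤ ENNReal.ofReal (c₂ * Cα * K * R ^ (-α)) := by
          rw [← ENNReal.ofReal_mul (by positivity)]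
          refine ENNReal.ofReal_le_ofReal ?_
          rw [Real.one_rpow, mul_one]
          calc c₂ * K * R ^ (-2:ℝ) * Cα = c₂ * Cα * K * R ^ (-2:ℝ) := by ring
            _ ≤ c₂ * Cα * K * R ^ (-α) :=
                mul_le_mul_of_nonneg_left
                  (Real.rpow_le_rpow_of_exponent_le hR (by linarith)) (by positivity)
  -- region S₂
  have hbound₂ : ∫⁻ y in S₂, f y ≤ ENNReal.ofReal (c₂ * Cδ * K * R ^ (-δ)) := by
    have hpt : ∀ y ∈ S₂, f y ≤
        ENNReal.ofReal (c₂ * K * R ^ (-2:ℝ)) * ENNReal.ofReal (‖y‖ ^ (2 - (n:ℝ) - δ)) := by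
      intro y hy
      rcases hy with ⟨hy1, hy2⟩
      rw [mem_closedBall_zero_iff] at hy1
      rw [mem_closedBall_zero_iff, not_le] at hy2
      have hy0 : 0 < ‖y‖ := lt_trans one_pos hy2
      obtain ⟨hppos, hpu⟩ := hgt1 y hy2
      have hminn : 0 ≤ min (K * R ^ (-2:ℝ) * ‖y‖ ^ 2) 4 :=
        le_min (by positivity) (by norm_num)
      simp only [hf]
      rw [← enorm_eq_nnnorm, Real.enorm_eq_ofReal hppos, ← ENNReal.ofReal_mul hppos,
        ← ENNReal.ofReal_mul (by positivity)]
      refine ENNReal.ofReal_le_ofReal ?_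
      calc pik y * min (K * R ^ (-2:ℝ) * ‖y‖ ^ 2) 4
          ≤ (c₂ * ‖y‖ ^ (-(n:ℝ) - δ)) * (K * R ^ (-2:ℝ) * ‖y‖ ^ 2) :=
            mul_le_mul hpu (min_le_left _ _) hminn (by positivity)
        _ = c₂ * K * R ^ (-2:ℝ) * (‖y‖ ^ (-(n:ℝ) - δ) * ‖y‖ ^ (2:ℝ)) := by
            rw [← Real.rpow_natCast ‖y‖ 2]; push_cast; ring
        _ = c₂ * K * R ^ (-2:ℝ) * ‖y‖ ^ (2 - (n:ℝ) - δ) := by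
            rw [← Real.rpow_add hy0]; ring_nf
    have hsub : S₂ ⊆ closedBall (0 : EuclideanSpace ℝ (Fin n)) R \ {0} := by
      intro y hy
      rcases hy with ⟨hy1, hy2⟩
      rw [mem_closedBall_zero_iff, not_le] at hy2
      refine ⟨hy1, fun h => ?_⟩
      rw [mem_singleton_iff] at h
      rw [h, norm_zero] at hy2
      linarith
    calc ∫⁻ y in S₂, f y
        ≤ ∫⁻ y in S₂, ENNReal.ofReal (c₂ * K * R ^ (-2:ℝ)) *
            ENNReal.ofReal (‖y‖ ^ (2 - (n:ℝ) - δ)) :=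
          setLIntegral_mono' (measurableSet_closedBall.diff measurableSet_closedBall) hpt
      _ = ENNReal.ofReal (c₂ * K * R ^ (-2:ℝ)) *
            ∫⁻ y in S₂, ENNReal.ofReal (‖y‖ ^ (2 - (n:ℝ) - δ)) :=
          lintegral_const_mul' _ _ ENNReal.ofReal_ne_top
      _ ≤ ENNReal.ofReal (c₂ * K * R ^ (-2:ℝ)) *
            ENNReal.ofReal (Cδ * R ^ ((n:ℝ) + (2 - (n:ℝ) - δ))) := by
          gcongr
          exact le_trans (lintegral_mono_set hsub) (hCδle R hR0)
      _ ≤ ENNReal.ofReal (c₂ * Cδ * K * R ^ (-δ)) := by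
          rw [← ENNReal.ofReal_mul (by positivity)]
          refine ENNReal.ofReal_le_ofReal (le_of_eq ?_)
          rw [show (n:ℝ) + (2 - (n:ℝ) - δ) = 2 - δ by ring]
          rw [show c₂ * K * R ^ (-2:ℝ) * (Cδ * R ^ (2 - δ))
              = c₂ * Cδ * K * (R ^ (-2:ℝ) * R ^ (2 - δ)) by ring]
          rw [← Real.rpow_add hR0]
          ring_nf
  -- region S₃
  have hbound₃ : ∫⁻ y in S₃, f y ≤ ENNReal.ofReal (4 * c₂ * Ct * R ^ (-δ)) := by
    have hpt : ∀ y ∈ S₃, f y ≤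
        ENNReal.ofReal (4 * c₂) * ENNReal.ofReal (‖y‖ ^ (-(n:ℝ) - δ)) := by
      intro y hy
      rw [hS₃, mem_compl_iff, mem_closedBall_zero_iff, not_le] at hy
      have hy1 : 1 < ‖y‖ := lt_of_le_of_lt hR hy
      obtain ⟨hppos, hpu⟩ := hgt1 y hy1
      have hminn : 0 ≤ min (K * R ^ (-2:ℝ) * ‖y‖ ^ 2) 4 :=
        le_min (by positivity) (by norm_num)
      simp only [hf]
      rw [← enorm_eq_nnnorm, Real.enorm_eq_ofReal hppos, ← ENNReal.ofReal_mul hppos,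
        ← ENNReal.ofReal_mul (by positivity)]
      refine ENNReal.ofReal_le_ofReal ?_
      calc pik y * min (K * R ^ (-2:ℝ) * ‖y‖ ^ 2) 4
          ≤ (c₂ * ‖y‖ ^ (-(n:ℝ) - δ)) * 4 :=
            mul_le_mul hpu (min_le_right _ _) hminn (by positivity)
        _ = 4 * c₂ * ‖y‖ ^ (-(n:ℝ) - δ) := by ring
    calc ∫⁻ y in S₃, f y
        ≤ ∫⁻ y in S₃, ENNReal.ofReal (4 * c₂) *
            ENNReal.ofReal (‖y‖ ^ (-(n:ℝ) - δ)) :=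
          setLIntegral_mono' measurableSet_closedBall.compl hpt
      _ = ENNReal.ofReal (4 * c₂) * ∫⁻ y in S₃, ENNReal.ofReal (‖y‖ ^ (-(n:ℝ) - δ)) :=
          lintegral_const_mul' _ _ ENNReal.ofReal_ne_top
      _ ≤ ENNReal.ofReal (4 * c₂) * ENNReal.ofReal (Ct * R ^ (-δ)) := by
          gcongr
          exact hCtle R hR0
      _ = ENNReal.ofReal (4 * c₂ * Ct * R ^ (-δ)) := by
          rw [← ENNReal.ofReal_mul (by positivity)]
          ring_nf
  -- assemble
  calc ∫⁻ y, f y = ∫⁻ y in (univ : Set (EuclideanSpace ℝ (Fin n))), f y :=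
        (setLIntegral_univ f).symm
    _ ≤ ∫⁻ y in ({0} ∪ S₁) ∪ (S₂ ∪ S₃), f y := lintegral_mono_set hcover
    _ ≤ (∫⁻ y in ({0} ∪ S₁), f y) + ∫⁻ y in (S₂ ∪ S₃), f y := lintegral_union_le _ _ _
    _ ≤ ((∫⁻ y in ({0} : Set (EuclideanSpace ℝ (Fin n))), f y) + ∫⁻ y in S₁, f y)
        + ((∫⁻ y in S₂, f y) + ∫⁻ y in S₃, f y) := by
        gcongr <;> exact lintegral_union_le _ _ _
    _ ≤ (0 + ENNReal.ofReal (c₂ * Cα * K * R ^ (-α)))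
        + (ENNReal.ofReal (c₂ * Cδ * K * R ^ (-δ)) + ENNReal.ofReal (4 * c₂ * Ct * R ^ (-δ))) := by
        gcongr
        rw [setLIntegral_measure_zero _ _ hzero]
    _ ≤ ENNReal.ofReal (c₂ * (Cα + Cδ + 4 * Ct) * K * (R ^ (-α) + R ^ (-δ))) := by
        rw [zero_add, ← ENNReal.ofReal_add (by positivity) (by positivity),
          ← ENNReal.ofReal_add (by positivity) (by positivity)]
        refine ENNReal.ofReal_le_ofReal ?_
        have h1 : (0:ℝ) < R ^ (-α) := Real.rpow_pos_of_pos hR0 _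
        have h2 : (0:ℝ) < R ^ (-δ) := Real.rpow_pos_of_pos hR0 _
        have hK0 : (0:ℝ) ≤ K := le_trans zero_le_one hK
        have p1 : 0 ≤ c₂ * K * (Cδ + 4 * Ct) * R ^ (-α) :=
          mul_nonneg (mul_nonneg (mul_nonneg hc₂.le hK0) (by linarith)) h1.le
        have p2 : 0 ≤ c₂ * K * Cα * R ^ (-δ) :=
          mul_nonneg (mul_nonneg (mul_nonneg hc₂.le hK0) hCα.le) h2.le
        have p3 : 0 ≤ 4 * c₂ * Ct * (K - 1) * R ^ (-δ) :=
          mul_nonneg (mul_nonneg (by positivity) (by linarith)) h2.le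
        have e : c₂ * (Cα + Cδ + 4 * Ct) * K * (R ^ (-α) + R ^ (-δ))
            - (c₂ * Cα * K * R ^ (-α) + (c₂ * Cδ * K * R ^ (-δ) + 4 * c₂ * Ct * R ^ (-δ)))
            = c₂ * K * (Cδ + 4 * Ct) * R ^ (-α) + c₂ * K * Cα * R ^ (-δ)
              + 4 * c₂ * Ct * (K - 1) * R ^ (-δ) := by ring
        linarith

private lemma second_diff_bound {n : ℕ} {φ₀ : EuclideanSpace ℝ (Fin n) → ℝ}
    (hφsmooth : ContDiff ℝ (⊤ : ℕ∞) φ₀) (hφsupp : HasCompactSupport φ₀) :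
    ∃ M : ℝ, 0 ≤ M ∧ ∀ x y : EuclideanSpace ℝ (Fin n),
      |φ₀ (x + y) + φ₀ (x - y) - 2 * φ₀ x| ≤ 2 * M * ‖y‖ ^ 2 := by
  set f' := fderiv ℝ φ₀ with hf'
  have hφdiff : Differentiable ℝ φ₀ := hφsmooth.differentiable (by simp)
  have hf'smooth : ContDiff ℝ (⊤ : ℕ∞) f' := hφsmooth.fderiv_right (by simp)
  have hf'diff : Differentiable ℝ f' := hf'smooth.differentiable (by simp)
  have hf''cont : Continuous (fderiv ℝ f') := hf'smooth.continuous_fderiv (by simp)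
  have hf''supp : HasCompactSupport (fderiv ℝ f') := (hφsupp.fderiv ℝ).fderiv ℝ
  obtain ⟨M, hM⟩ : ∃ C, ∀ x, ‖fderiv ℝ f' x‖ ≤ C := by
    clear_value f'
    exact HasCompactSupport.exists_bound_of_continuous
      (E := EuclideanSpace ℝ (Fin n) →L[ℝ] EuclideanSpace ℝ (Fin n) →L[ℝ] ℝ) (f := fderiv ℝ f') hf''supp hf''cont
  have hM0 : 0 ≤ M := le_trans (norm_nonneg (fderiv ℝ f' 0)) (hM 0)
  refine ⟨M, hM0, fun x y => ?_⟩
  -- f' is M-Lipschitz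
  have hlip : ∀ a b : EuclideanSpace ℝ (Fin n), ‖f' a - f' b‖ ≤ M * ‖a - b‖ := by
    intro a b
    exact Convex.norm_image_sub_le_of_norm_fderiv_le
      (fun z _ => hf'diff z) (fun z _ => hM z) convex_univ (mem_univ b) (mem_univ a)
  set g : ℝ → ℝ := fun t => φ₀ (x + t • y) + φ₀ (x - t • y) with hg
  set g' : ℝ → ℝ := fun t => (f' (x + t • y)) y - (f' (x - t • y)) y with hg'
  have hder : ∀ t : ℝ, HasDerivAt g (g' t) t := by
    intro t
    have h1 : HasDerivAt (fun t : ℝ => x + t • y) y t := by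
      simpa using ((hasDerivAt_id t).smul_const y).const_add x
    have h2 : HasDerivAt (fun t : ℝ => x - t • y) (-y) t := by
      simpa [sub_eq_add_neg] using ((hasDerivAt_id t).smul_const y).neg.const_add x
    have h3 : HasDerivAt (fun t : ℝ => φ₀ (x + t • y)) ((f' (x + t • y)) y) t :=
      (hφdiff (x + t • y)).hasFDerivAt.comp_hasDerivAt t h1
    have h4 : HasDerivAt (fun t : ℝ => φ₀ (x - t • y)) ((f' (x - t • y)) (-y)) t :=
      (hφdiff (x - t • y)).hasFDerivAt.comp_hasDerivAt t h2
    have := h3.add h4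
    have e : g' t = (f' (x + t • y)) y + (f' (x - t • y)) (-y) := by
      simp [hg', map_neg, sub_eq_add_neg]
    rw [e]; exact this
  have hbound : ∀ t ∈ Ico (0:ℝ) 1, ‖g' t‖ ≤ 2 * M * ‖y‖ ^ 2 := by
    intro t ht
    have h1 : g' t = (f' (x + t • y) - f' (x - t • y)) y := by
      simp [hg', ContinuousLinearMap.sub_apply]
    rw [h1]
    calc ‖(f' (x + t • y) - f' (x - t • y)) y‖
        ≤ ‖f' (x + t • y) - f' (x - t • y)‖ * ‖y‖ :=
          ContinuousLinearMap.le_opNorm _ _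
      _ ≤ (M * ‖(x + t • y) - (x - t • y)‖) * ‖y‖ := by
          gcongr
          exact hlip _ _
      _ = (M * ‖(2 * t) • y‖) * ‖y‖ := by
          congr 2
          rw [show (x + t • y) - (x - t • y) = (2 * t) • y by
            rw [two_mul, add_smul]; abel]
      _ = M * (|2 * t| * ‖y‖) * ‖y‖ := by rw [norm_smul, Real.norm_eq_abs]
      _ ≤ M * (2 * ‖y‖) * ‖y‖ := by
          gcongr
          rw [abs_mul, abs_two]
          rcases ht with ⟨ht0, ht1⟩
          rw [abs_of_nonneg ht0]
          nlinarith
      _ = 2 * M * ‖y‖ ^ 2 := by ring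
  have hmvt := norm_image_sub_le_of_norm_deriv_le_segment_01'
    (f' := g') (fun t _ => (hder t).hasDerivWithinAt) hbound
  have hg1 : g 1 = φ₀ (x + y) + φ₀ (x - y) := by simp [hg]
  have hg0 : g 0 = 2 * φ₀ x := by simp [hg]; ring
  rw [hg1, hg0] at hmvt
  simpa [Real.norm_eq_abs] using hmvt

/-- `L^p` bounds for `ℒφ` where `φ(x) = φ₀(x/R)` is a rescaled cutoff:
`‖ℒφ‖_{L^p} ≤ C R^{n/p} (R^{-α} + R^{-δ})` for all `R ≥ 1` and `p ∈ [1,∞]`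
(with the convention `n/∞ = 0`); `C` depends only on `n, α, δ, c₂, φ₀`. -/
theorem statement16
    (n : ℕ) (hn : 1 ≤ n) (α δ : ℝ) (hδpos : 0 < δ) (hδα : δ < α) (hα2 : α < 2)
    (c₂ : ℝ) (hc₂ : 0 < c₂)
    (φ₀ : EuclideanSpace ℝ (Fin n) → ℝ)
    (hφsmooth : ContDiff ℝ (⊤ : ℕ∞) φ₀) (hφsupp : HasCompactSupport φ₀)
    (hφ01 : ∀ x, 0 ≤ φ₀ x ∧ φ₀ x ≤ 1)
    (hφone : ∀ x : EuclideanSpace ℝ (Fin n), ‖x‖ ≤ 1 / 2 → φ₀ x = 1)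
    (hφzero : ∀ x : EuclideanSpace ℝ (Fin n), 1 ≤ ‖x‖ → φ₀ x = 0) :
    ∃ C : ℝ, 0 < C ∧
      ∀ c₁ : ℝ, 0 < c₁ → c₁ ≤ c₂ →
      ∀ pik : EuclideanSpace ℝ (Fin n) → ℝ, satND n α δ c₁ c₂ pik →
      ∀ R : ℝ, 1 ≤ R →
      ∀ p : ℝ≥0∞, 1 ≤ p →
        eLpNorm (levyApp n pik (fun x => φ₀ (R⁻¹ • x))) p volume ≤
          ENNReal.ofReal (C * R ^ ((n : ℝ) / p.toReal) * (R ^ (-α) + R ^ (-δ))) := by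
  classical
  obtain ⟨M, hM0, hMD⟩ := second_diff_bound hφsmooth hφsupp
  set K := max (2 * M) 1 with hKdef
  have hK1 : 1 ≤ K := le_max_right _ _
  have hK0 : (0:ℝ) ≤ K := le_trans zero_le_one hK1
  obtain ⟨C₀, hC₀, hcore⟩ := core_bound n hn hδpos hδα hα2 hc₂
  set V := volume (closedBall (0 : EuclideanSpace ℝ (Fin n)) 1) with hVdef
  have hVfin : V ≠ ⊤ := measure_closedBall_lt_top.ne
  set Vr : ℝ := V.toReal + 1 with hVrdef
  have hVr : 0 < Vr := by
    have := ENNReal.toReal_nonneg (a := V); rw [hVrdef]; linarith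
  set C₁ : ℝ := C₀ * K with hC₁def
  set C₂' : ℝ := 3 * Vr * (C₀ * K) with hC₂def
  have hC₁ : 0 < C₁ := by positivity
  have hC₂' : 0 < C₂' := by positivity
  set C : ℝ := max C₁ C₂' with hCdef
  have hC : 0 < C := lt_of_lt_of_le hC₁ (le_max_left _ _)
  refine ⟨C, hC, fun c₁ hc₁ hc₁₂ pik hND R hR p hp => ?_⟩
  have hR0 : (0:ℝ) < R := lt_of_lt_of_le one_pos hR
  have hmeaspik : Measurable pik := hND.1
  set S : ℝ := R ^ (-α) + R ^ (-δ) with hSdef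
  have hS0 : 0 < S := by
    have := Real.rpow_pos_of_pos hR0 (-α)
    have := Real.rpow_pos_of_pos hR0 (-δ)
    rw [hSdef]; linarith
  set φ : EuclideanSpace ℝ (Fin n) → ℝ := fun x => φ₀ (R⁻¹ • x) with hφdef
  have hφabs : ∀ z, |φ z| ≤ 1 := by
    intro z
    obtain ⟨h1, h2⟩ := hφ01 (R⁻¹ • z)
    rw [hφdef, abs_le]; constructor <;> simp <;> linarith
  -- the second-difference bound
  have hDbound : ∀ x y : EuclideanSpace ℝ (Fin n),
      |2 * φ x - φ (x + y) - φ (x - y)| ≤ min (K * R ^ (-2:ℝ) * ‖y‖ ^ 2) 4 := by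
    intro x y
    refine le_min ?_ ?_
    · have h3 := hMD (R⁻¹ • x) (R⁻¹ • y)
      have h4 : 2 * φ x - φ (x + y) - φ (x - y)
          = -(φ₀ (R⁻¹ • x + R⁻¹ • y) + φ₀ (R⁻¹ • x - R⁻¹ • y) - 2 * φ₀ (R⁻¹ • x)) := by
        simp only [hφdef, smul_add, smul_sub]; ring
      rw [h4, abs_neg]
      have h5 : ‖R⁻¹ • y‖ ^ 2 = R ^ (-2:ℝ) * ‖y‖ ^ 2 := by
        rw [norm_smul, norm_inv, Real.norm_eq_abs, abs_of_pos hR0, mul_pow,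
          Real.rpow_neg hR0.le, Real.rpow_two, inv_pow]
      have h6 : 2 * M ≤ K := le_max_left _ _
      calc |φ₀ (R⁻¹ • x + R⁻¹ • y) + φ₀ (R⁻¹ • x - R⁻¹ • y) - 2 * φ₀ (R⁻¹ • x)|
          ≤ 2 * M * ‖R⁻¹ • y‖ ^ 2 := h3
        _ ≤ K * ‖R⁻¹ • y‖ ^ 2 := mul_le_mul_of_nonneg_right h6 (by positivity)
        _ = K * R ^ (-2:ℝ) * ‖y‖ ^ 2 := by rw [h5]; ring
    · have := hφabs x
      have := hφabs (x + y)
      have := hφabs (x - y)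
      have h := abs_sub (2 * φ x - φ (x + y)) (φ (x - y))
      calc |2 * φ x - φ (x + y) - φ (x - y)|
          ≤ |2 * φ x| + |φ (x + y)| + |φ (x - y)| := by
            have := abs_sub_abs_le_abs_sub (2 * φ x) (φ (x + y))
            calc |2 * φ x - φ (x + y) - φ (x - y)|
                ≤ |2 * φ x - φ (x + y)| + |φ (x - y)| := abs_sub _ _
              _ ≤ (|2 * φ x| + |φ (x + y)|) + |φ (x - y)| := by
                  gcongr; exact abs_sub _ _
        _ ≤ 4 := by rw [abs_mul, abs_two]; linarith [hφabs x, hφabs (x+y), hφabs (x-y)]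
  -- pointwise (in x) bound on the inner lintegral
  have hinner : ∀ x : EuclideanSpace ℝ (Fin n),
      ∫⁻ y, (‖(2 * φ x - φ (x + y) - φ (x - y)) * pik y‖₊ : ℝ≥0∞)
        ≤ ENNReal.ofReal (C₁ * S) := by
    intro x
    calc ∫⁻ y, (‖(2 * φ x - φ (x + y) - φ (x - y)) * pik y‖₊ : ℝ≥0∞)
        ≤ ∫⁻ y, (‖pik y‖₊ : ℝ≥0∞) *
            ENNReal.ofReal (min (K * R ^ (-2:ℝ) * ‖y‖ ^ 2) 4) := by
          refine lintegral_mono fun y => ?_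
          rw [nnnorm_mul, ENNReal.coe_mul, mul_comm]
          gcongr
          rw [← enorm_eq_nnnorm, Real.enorm_eq_ofReal_abs]
          exact ENNReal.ofReal_le_ofReal (hDbound x y)
      _ ≤ ENNReal.ofReal (C₀ * K * S) := hcore K hK1 c₁ hc₁ pik hND R hR
      _ = ENNReal.ofReal (C₁ * S) := by rw [hC₁def]
  -- pointwise bound on L
  have hLptw : ∀ x, (‖levyApp n pik φ x‖₊ : ℝ≥0∞) ≤ ENNReal.ofReal (C₁ * S) := by
    intro x
    have h0 : levyApp n pik φ x
        = (1/2 : ℝ) * ∫ y, (2 * φ x - φ (x + y) - φ (x - y)) * pik y := rfl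
    calc (‖levyApp n pik φ x‖₊ : ℝ≥0∞)
        = (‖(1/2 : ℝ)‖₊ : ℝ≥0∞) *
          (‖∫ y, (2 * φ x - φ (x + y) - φ (x - y)) * pik y‖₊ : ℝ≥0∞) := by
          rw [h0, nnnorm_mul, ENNReal.coe_mul]
      _ ≤ 1 * ∫⁻ y, (‖(2 * φ x - φ (x + y) - φ (x - y)) * pik y‖₊ : ℝ≥0∞) := by
          refine mul_le_mul' ?_ (enorm_integral_le_lintegral_enorm _)
          rw [← enorm_eq_nnnorm, Real.enorm_eq_ofReal (by norm_num)]
          exact ENNReal.ofReal_le_one.mpr (by norm_num)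
      _ ≤ ENNReal.ofReal (C₁ * S) := by rw [one_mul]; exact hinner x
  -- L¹ bound
  have hφcont : Continuous φ := hφsmooth.continuous.comp (continuous_const_smul R⁻¹)
  have hL1 : ∫⁻ x, (‖levyApp n pik φ x‖₊ : ℝ≥0∞)
      ≤ ENNReal.ofReal (C₂' * R ^ (n:ℝ) * S) := by
    have hg : Measurable (fun z : EuclideanSpace ℝ (Fin n) × EuclideanSpace ℝ (Fin n) =>
        ((‖(2 * φ z.1 - φ (z.1 + z.2) - φ (z.1 - z.2)) * pik z.2‖₊ : ℝ≥0∞))) := by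
      have hD : Continuous (fun z : EuclideanSpace ℝ (Fin n) × EuclideanSpace ℝ (Fin n) =>
          2 * φ z.1 - φ (z.1 + z.2) - φ (z.1 - z.2)) := by
        refine Continuous.sub (Continuous.sub ?_ ?_) ?_
        · exact continuous_const.mul (hφcont.comp continuous_fst)
        · exact hφcont.comp (continuous_fst.add continuous_snd)
        · exact hφcont.comp (continuous_fst.sub continuous_snd)
      exact ((hD.measurable.mul (hmeaspik.comp measurable_snd)).nnnorm).coe_nnreal_ennreal
    -- support bound on the x-integral for fixed y
    have hxint : ∀ y : EuclideanSpace ℝ (Fin n),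
        ∫⁻ x, (‖2 * φ x - φ (x + y) - φ (x - y)‖₊ : ℝ≥0∞)
          ≤ ENNReal.ofReal (min (K * R ^ (-2:ℝ) * ‖y‖ ^ 2) 4) *
            (ENNReal.ofReal (R ^ (n:ℝ)) * (3 * V)) := by
      intro y
      set U : Set (EuclideanSpace ℝ (Fin n)) :=
        (closedBall 0 R ∪ closedBall (-y) R) ∪ closedBall y R with hUdef
      have hUmeas : MeasurableSet U :=
        ((measurableSet_closedBall.union measurableSet_closedBall).union
          measurableSet_closedBall)
      have hzero : ∀ x : EuclideanSpace ℝ (Fin n), x ∉ U →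
          2 * φ x - φ (x + y) - φ (x - y) = 0 := by
        intro x hx
        rw [hUdef] at hx
        simp only [mem_union, not_or, mem_closedBall, not_le] at hx
        obtain ⟨⟨hx1, hx2⟩, hx3⟩ := hx
        have e1 : φ x = 0 := by
          rw [hφdef]
          apply hφzero
          rw [norm_smul, norm_inv, Real.norm_eq_abs, abs_of_pos hR0]
          rw [dist_zero_right] at hx1
          rw [le_inv_mul_iff₀ hR0, mul_one]
          exact hx1.le
        have e2 : φ (x + y) = 0 := by
          rw [hφdef]
          apply hφzero
          rw [norm_smul, norm_inv, Real.norm_eq_abs, abs_of_pos hR0]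
          rw [le_inv_mul_iff₀ hR0, mul_one]
          have : dist x (-y) = ‖x + y‖ := by
            rw [dist_eq_norm, sub_neg_eq_add]
          rw [this] at hx2
          exact hx2.le
        have e3 : φ (x - y) = 0 := by
          rw [hφdef]
          apply hφzero
          rw [norm_smul, norm_inv, Real.norm_eq_abs, abs_of_pos hR0]
          rw [le_inv_mul_iff₀ hR0, mul_one]
          have : dist x y = ‖x - y‖ := dist_eq_norm _ _
          rw [this] at hx3
          exact hx3.le
        rw [e1, e2, e3]; ring
      have hptind : ∀ x : EuclideanSpace ℝ (Fin n),
          (‖2 * φ x - φ (x + y) - φ (x - y)‖₊ : ℝ≥0∞) ≤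
            U.indicator (fun _ =>
              ENNReal.ofReal (min (K * R ^ (-2:ℝ) * ‖y‖ ^ 2) 4)) x := by
        intro x
        by_cases hx : x ∈ U
        · rw [indicator_of_mem hx]
          rw [← enorm_eq_nnnorm, Real.enorm_eq_ofReal_abs]
          exact ENNReal.ofReal_le_ofReal (hDbound x y)
        · rw [indicator_of_notMem hx, hzero x hx]
          simp
      have hUvol : volume U ≤ ENNReal.ofReal (R ^ (n:ℝ)) * (3 * V) := by
        have hball : ∀ z : EuclideanSpace ℝ (Fin n),
            volume (closedBall z R) = ENNReal.ofReal (R ^ (n:ℝ)) * V := by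
          intro z
          rw [Measure.addHaar_closedBall' volume z hR0.le, finrank_euclideanSpace_fin,
            Real.rpow_natCast]
        calc volume U ≤ volume (closedBall (0 : EuclideanSpace ℝ (Fin n)) R ∪ closedBall (-y) R)
              + volume (closedBall y R) := measure_union_le _ _
          _ ≤ (volume (closedBall (0 : EuclideanSpace ℝ (Fin n)) R) + volume (closedBall (-y) R))
              + volume (closedBall y R) := by gcongr; exact measure_union_le _ _
          _ = ENNReal.ofReal (R ^ (n:ℝ)) * (3 * V) := by
              rw [hball, hball, hball]; ring
      calc ∫⁻ x, (‖2 * φ x - φ (x + y) - φ (x - y)‖₊ : ℝ≥0∞)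
          ≤ ∫⁻ x, U.indicator (fun _ =>
              ENNReal.ofReal (min (K * R ^ (-2:ℝ) * ‖y‖ ^ 2) 4)) x :=
            lintegral_mono hptind
        _ = ENNReal.ofReal (min (K * R ^ (-2:ℝ) * ‖y‖ ^ 2) 4) * volume U :=
            lintegral_indicator_const hUmeas _
        _ ≤ _ := mul_le_mul_right hUvol _
    calc ∫⁻ x, (‖levyApp n pik φ x‖₊ : ℝ≥0∞)
        ≤ ∫⁻ x, ∫⁻ y, (‖(2 * φ x - φ (x + y) - φ (x - y)) * pik y‖₊ : ℝ≥0∞) := by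
          refine lintegral_mono fun x => ?_
          have h0 : levyApp n pik φ x
              = (1/2 : ℝ) * ∫ y, (2 * φ x - φ (x + y) - φ (x - y)) * pik y := rfl
          calc (‖levyApp n pik φ x‖₊ : ℝ≥0∞)
              = (‖(1/2 : ℝ)‖₊ : ℝ≥0∞) *
                (‖∫ y, (2 * φ x - φ (x + y) - φ (x - y)) * pik y‖₊ : ℝ≥0∞) := by
                rw [h0, nnnorm_mul, ENNReal.coe_mul]
            _ ≤ 1 * ∫⁻ y, (‖(2 * φ x - φ (x + y) - φ (x - y)) * pik y‖₊ : ℝ≥0∞) := by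
                refine mul_le_mul' ?_ (enorm_integral_le_lintegral_enorm _)
                rw [← enorm_eq_nnnorm, Real.enorm_eq_ofReal (by norm_num)]
                exact ENNReal.ofReal_le_one.mpr (by norm_num)
            _ = _ := one_mul _
      _ = ∫⁻ y, ∫⁻ x, (‖(2 * φ x - φ (x + y) - φ (x - y)) * pik y‖₊ : ℝ≥0∞) :=
          lintegral_lintegral_swap hg.aemeasurable
      _ ≤ ∫⁻ y, (ENNReal.ofReal (R ^ (n:ℝ)) * (3 * V)) *
            ((‖pik y‖₊ : ℝ≥0∞) * ENNReal.ofReal (min (K * R ^ (-2:ℝ) * ‖y‖ ^ 2) 4)) := by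
          refine lintegral_mono fun y => ?_
          calc ∫⁻ x, (‖(2 * φ x - φ (x + y) - φ (x - y)) * pik y‖₊ : ℝ≥0∞)
              = ∫⁻ x, (‖2 * φ x - φ (x + y) - φ (x - y)‖₊ : ℝ≥0∞) * (‖pik y‖₊ : ℝ≥0∞) :=
                lintegral_congr fun x => by rw [nnnorm_mul, ENNReal.coe_mul]
            _ = (∫⁻ x, (‖2 * φ x - φ (x + y) - φ (x - y)‖₊ : ℝ≥0∞)) * (‖pik y‖₊ : ℝ≥0∞) :=
                lintegral_mul_const' _ _ ENNReal.coe_ne_top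
            _ ≤ (ENNReal.ofReal (min (K * R ^ (-2:ℝ) * ‖y‖ ^ 2) 4) *
                  (ENNReal.ofReal (R ^ (n:ℝ)) * (3 * V))) * (‖pik y‖₊ : ℝ≥0∞) := by
                gcongr
                exact hxint y
            _ = (ENNReal.ofReal (R ^ (n:ℝ)) * (3 * V)) *
                ((‖pik y‖₊ : ℝ≥0∞) * ENNReal.ofReal (min (K * R ^ (-2:ℝ) * ‖y‖ ^ 2) 4)) := by
                ring
      _ = (ENNReal.ofReal (R ^ (n:ℝ)) * (3 * V)) *
            ∫⁻ y, (‖pik y‖₊ : ℝ≥0∞) * ENNReal.ofReal (min (K * R ^ (-2:ℝ) * ‖y‖ ^ 2) 4) :=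
          lintegral_const_mul' _ _
            (ENNReal.mul_ne_top ENNReal.ofReal_ne_top
              (ENNReal.mul_ne_top (by norm_num) hVfin))
      _ ≤ (ENNReal.ofReal (R ^ (n:ℝ)) * (3 * V)) * ENNReal.ofReal (C₀ * K * S) := by
          gcongr
          exact hcore K hK1 c₁ hc₁ pik hND R hR
      _ ≤ ENNReal.ofReal (C₂' * R ^ (n:ℝ) * S) := by
          have hVle : V ≤ ENNReal.ofReal Vr :=
            (ENNReal.ofReal_toReal hVfin).symm.trans_le
              (ENNReal.ofReal_le_ofReal (by rw [hVrdef]; linarith))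
          calc ENNReal.ofReal (R ^ (n:ℝ)) * (3 * V) * ENNReal.ofReal (C₀ * K * S)
              ≤ ENNReal.ofReal (R ^ (n:ℝ)) * (ENNReal.ofReal 3 * ENNReal.ofReal Vr) *
                ENNReal.ofReal (C₀ * K * S) := by
                refine mul_le_mul' (mul_le_mul' le_rfl ?_) le_rfl
                refine mul_le_mul' (le_of_eq ?_) hVle
                rw [ENNReal.ofReal_ofNat]
            _ = ENNReal.ofReal (C₂' * R ^ (n:ℝ) * S) := by
                rw [← ENNReal.ofReal_mul (by positivity), ← ENNReal.ofReal_mul (by positivity),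
                  ← ENNReal.ofReal_mul (by positivity)]
                congr 1
                rw [hC₂def]
                ring
  -- now split on p
  rcases eq_or_ne p ⊤ with hptop | hptop
  · subst hptop
    rw [eLpNorm_exponent_top]
    have hreal : ∀ x, ‖levyApp n pik φ x‖ ≤ C₁ * S := by
      intro x
      have h := hLptw x
      have h2 := ENNReal.toReal_mono ENNReal.ofReal_ne_top h
      rwa [ENNReal.coe_toReal, coe_nnnorm, ENNReal.toReal_ofReal (by positivity)] at h2
    calc eLpNormEssSup (levyApp n pik φ) volume ≤ ENNReal.ofReal (C₁ * S) :=
          eLpNormEssSup_le_of_ae_bound (ae_of_all _ hreal)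
      _ ≤ ENNReal.ofReal (C * R ^ ((n:ℝ) / (⊤:ℝ≥0∞).toReal) * S) := by
          refine ENNReal.ofReal_le_ofReal ?_
          rw [ENNReal.toReal_top, div_zero, Real.rpow_zero, mul_one]
          exact mul_le_mul_of_nonneg_right (le_max_left _ _) hS0.le
  · have hp0 : p ≠ 0 := by
      intro h; rw [h] at hp; exact absurd hp (by simp)
    set q : ℝ := p.toReal with hqdef
    have hq1 : 1 ≤ q := by
      rw [hqdef, ← ENNReal.toReal_one]
      exact ENNReal.toReal_mono hptop hp
    have hq0 : 0 < q := lt_of_lt_of_le one_pos hq1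
    rw [eLpNorm_eq_lintegral_rpow_enorm_toReal hp0 hptop]
    have step1 : ∫⁻ x, (‖levyApp n pik φ x‖₊ : ℝ≥0∞) ^ q
        ≤ ENNReal.ofReal (C₁ * S) ^ (q - 1) * ENNReal.ofReal (C₂' * R ^ (n:ℝ) * S) := by
      calc ∫⁻ x, (‖levyApp n pik φ x‖₊ : ℝ≥0∞) ^ q
          ≤ ∫⁻ x, ENNReal.ofReal (C₁ * S) ^ (q - 1) * (‖levyApp n pik φ x‖₊ : ℝ≥0∞) := by
            refine lintegral_mono fun x => ?_
            have h1 : ((‖levyApp n pik φ x‖₊ : ℝ≥0∞)) ^ q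
                = (‖levyApp n pik φ x‖₊ : ℝ≥0∞) ^ (q - 1) *
                  (‖levyApp n pik φ x‖₊ : ℝ≥0∞) ^ (1:ℝ) := by
              rw [← ENNReal.rpow_add_of_nonneg _ _ (by linarith) zero_le_one]
              norm_num
            rw [h1, ENNReal.rpow_one]
            exact mul_le_mul_left (ENNReal.rpow_le_rpow (hLptw x) (by linarith)) _
        _ = ENNReal.ofReal (C₁ * S) ^ (q - 1) * ∫⁻ x, (‖levyApp n pik φ x‖₊ : ℝ≥0∞) :=
            lintegral_const_mul' _ _
              (ENNReal.rpow_ne_top_of_nonneg (by linarith) ENNReal.ofReal_ne_top)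
        _ ≤ ENNReal.ofReal (C₁ * S) ^ (q - 1) * ENNReal.ofReal (C₂' * R ^ (n:ℝ) * S) := by
            gcongr
    calc (∫⁻ x, (‖levyApp n pik φ x‖₊ : ℝ≥0∞) ^ q) ^ (1/q)
        ≤ (ENNReal.ofReal (C₁ * S) ^ (q - 1) * ENNReal.ofReal (C₂' * R ^ (n:ℝ) * S)) ^ (1/q) :=
          ENNReal.rpow_le_rpow step1 (by positivity)
      _ = ENNReal.ofReal ((C₁ * S) ^ ((q-1) * (1/q)) * (C₂' * R ^ (n:ℝ) * S) ^ (1/q)) := by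
          have h1q : (0:ℝ) ≤ 1/q := one_div_nonneg.mpr hq0.le
          rw [ENNReal.mul_rpow_of_nonneg _ _ h1q, ← ENNReal.rpow_mul,
            ENNReal.ofReal_rpow_of_nonneg (mul_nonneg hC₁.le hS0.le)
              (mul_nonneg (by linarith) h1q),
            ENNReal.ofReal_rpow_of_nonneg
              (mul_nonneg (mul_nonneg hC₂'.le (Real.rpow_nonneg hR0.le _)) hS0.le) h1q,
            ← ENNReal.ofReal_mul (Real.rpow_nonneg (mul_nonneg hC₁.le hS0.le) _)]
      _ ≤ ENNReal.ofReal (C * R ^ ((n:ℝ) / p.toReal) * S) := by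
          refine ENNReal.ofReal_le_ofReal ?_
          have hθ : (q - 1) * (1/q) = 1 - 1/q := by field_simp
          have hθ0 : 0 ≤ 1/q := by positivity
          have hθ1 : 1/q ≤ 1 := by
            rw [div_le_one hq0]; exact hq1
          have e1 : (C₁ * S) ^ ((q-1) * (1/q)) = C₁ ^ (1 - 1/q) * S ^ (1 - 1/q) := by
            rw [hθ, Real.mul_rpow hC₁.le hS0.le]
          have e2 : (C₂' * R ^ (n:ℝ) * S) ^ (1/q)
              = C₂' ^ (1/q) * (R ^ (n:ℝ)) ^ (1/q) * S ^ (1/q) := by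
            rw [Real.mul_rpow (by positivity) hS0.le, Real.mul_rpow hC₂'.le (by positivity)]
          have e3 : (R ^ (n:ℝ)) ^ (1/q) = R ^ ((n:ℝ) / q) := by
            rw [← Real.rpow_mul hR0.le, mul_one_div]
          have e4 : S ^ (1 - 1/q) * S ^ (1/q) = S := by
            rw [← Real.rpow_add hS0]
            norm_num
          have e5 : C₁ ^ (1 - 1/q) * C₂' ^ (1/q) ≤ C := by
            have hh1 : C₁ ^ (1 - 1/q) ≤ C ^ (1 - 1/q) :=
              Real.rpow_le_rpow hC₁.le (le_max_left _ _) (by linarith)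
            have hh2 : C₂' ^ (1/q) ≤ C ^ (1/q) :=
              Real.rpow_le_rpow hC₂'.le (le_max_right _ _) hθ0
            calc C₁ ^ (1 - 1/q) * C₂' ^ (1/q)
                ≤ C ^ (1 - 1/q) * C ^ (1/q) :=
                  mul_le_mul hh1 hh2 (Real.rpow_nonneg hC₂'.le _) (Real.rpow_nonneg hC.le _)
            _ = C := by rw [← Real.rpow_add hC]; norm_num
          calc (C₁ * S) ^ ((q-1) * (1/q)) * (C₂' * R ^ (n:ℝ) * S) ^ (1/q)
              = (C₁ ^ (1 - 1/q) * C₂' ^ (1/q)) * R ^ ((n:ℝ)/q) *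
                (S ^ (1 - 1/q) * S ^ (1/q)) := by
                rw [e1, e2, e3]; ring
            _ = (C₁ ^ (1 - 1/q) * C₂' ^ (1/q)) * R ^ ((n:ℝ)/q) * S := by rw [e4]
            _ ≤ C * R ^ ((n:ℝ)/q) * S := by
                have hRq : (0:ℝ) ≤ R ^ ((n:ℝ)/q) := by positivity
                exact mul_le_mul_of_nonneg_right
                  (mul_le_mul_of_nonneg_right e5 hRq) hS0.le
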